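/- arXiv:2504.04146 — 2 statements merged into one kernel-verified Lean document; each statement's English description precedes it below -/
import Mathlib

section
/- Let R be a commutative approximately ring. If every approximately ideal of R other than R itself is an approximately prime ideal, then R is an approximately integral domain. -/
/-- Descriptively upper approximation: `Φ*A = {x : Φ x ∈ Φ(A)}`. -/
def PhiStar {X F : Type*} (Φ : X → F) (A : Set X) : Set X := {x | Φ x ∈ Φ '' A}

/-- `I` is an approximately ideal of the approximately ring `R`. -/
def IsApproxIdeal {X F : Type*} (Φ : X → F) (add : X → X → X) (neg : X → X)
    (mul : X → X → X) (R I : Set X) : Prop :=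
  I ⊆ R ∧ (∀ x ∈ I, ∀ y ∈ I, add x y ∈ PhiStar Φ I) ∧ (∀ x ∈ I, neg x ∈ I) ∧
  (∀ r ∈ R, ∀ x ∈ I, mul r x ∈ PhiStar Φ I ∧ mul x r ∈ PhiStar Φ I)

theorem subset_phiStar {X F : Type*} (Φ : X → F) (A : Set X) : A ⊆ PhiStar Φ A :=
  fun _ hx => Set.mem_image_of_mem Φ hx

theorem all_proper_ideals_prime_implies_approx_integral_domain_general
    {X F : Type*} (Φ : X → F) (add : X → X → X) (neg : X → X) (mul : X → X → X)
    (zero : X) (R : Set X)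
    -- the zero ideal `(0) = {0}` is an approximately ideal, and it is proper
    (hzeroIdeal : IsApproxIdeal Φ add neg mul R {zero})
    (hproper : ({zero} : Set X) ≠ R)
    -- every approximately ideal other than `R` is approximately prime
    (hprime : ∀ I : Set X, IsApproxIdeal Φ add neg mul R I → I ≠ R →
        ∀ a ∈ R, ∀ b ∈ R, mul a b ∈ PhiStar Φ I → a ∈ I ∨ b ∈ I) :
    ∀ a ∈ R, ∀ b ∈ R, mul a b = zero → a = zero ∨ b = zero := by
  intro a ha b hb hab
  have hab_star : mul a b ∈ PhiStar Φ {zero} :=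
    subset_phiStar Φ {zero} (Set.mem_singleton_iff.mpr hab)
  simpa only [Set.mem_singleton_iff] using hprime {zero} hzeroIdeal hproper a ha b hb hab_star

/-- If every approximately ideal of a commutative approximately ring `R`
other than `R` itself is approximately prime, then `R` is an approximately integral
domain: `a·b = 0` implies `a = 0` or `b = 0`. -/
theorem all_proper_ideals_prime_implies_approx_integral_domain
    {X F : Type*} (Φ : X → F) (add : X → X → X) (neg : X → X) (mul : X → X → X)
    (zero : X) (R : Set X) (hzR : zero ∈ R)
    -- `R` is commutative
    (hcomm : ∀ x ∈ R, ∀ y ∈ R, mul x y = mul y x)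
    -- the zero ideal `(0) = {0}` is an approximately ideal, and it is proper
    (hzeroIdeal : IsApproxIdeal Φ add neg mul R {zero})
    (hproper : ({zero} : Set X) ≠ R)
    -- every approximately ideal other than `R` is approximately prime
    (hprime : ∀ I : Set X, IsApproxIdeal Φ add neg mul R I → I ≠ R →
        ∀ a ∈ R, ∀ b ∈ R, mul a b ∈ PhiStar Φ I → a ∈ I ∨ b ∈ I) :
    ∀ a ∈ R, ∀ b ∈ R, mul a b = zero → a = zero ∨ b = zero :=
  all_proper_ideals_prime_implies_approx_integral_domain_general Φ add neg mul zero R hzeroIdeal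
    hproper hprime
end

section
/- Let R be an approximately ring with the property that every approximately ideal other than R is approximately prime, and suppose the zero ideal (0) is proper. Then for any a, b ∈ R and any nonzero r ∈ R with a·r·b = 0, either a = 0 or b = 0 (i.e., R is an approximately prime ring). -/
def IsApproxPrime {X F : Type*} (Φ : X → F) (mul : X → X → X) (R I : Set X) : Prop :=
  ∀ a ∈ R, ∀ b ∈ R, mul a b ∈ PhiStar Φ I → a ∈ I ∨ b ∈ I

namespace IsApproxPrime

variable {X F : Type*} {Φ : X → F} {mul : X → X → X} {R : Set X} {zero : X}

theorem eq_or_eq_of_mul_eq (h : IsApproxPrime Φ mul R {zero}) {a b : X} (ha : a ∈ R)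
    (hb : b ∈ R) (hab : mul a b = zero) : a = zero ∨ b = zero :=
  h a ha b hb (subset_phiStar Φ _ hab)

theorem eq_or_eq_of_mul_mul_eq (h : IsApproxPrime Φ mul R {zero})
    (hclosed : ∀ x ∈ R, ∀ y ∈ R, mul x y ∈ R) {a b r : X} (ha : a ∈ R) (hb : b ∈ R)
    (hr : r ∈ R) (hr0 : r ≠ zero) (harb : mul (mul a r) b = zero) : a = zero ∨ b = zero := by
  obtain har | hb0 := h.eq_or_eq_of_mul_eq (hclosed a ha r hr) hb harb
  · exact Or.inl ((h.eq_or_eq_of_mul_eq ha hr har).resolve_right hr0)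
  · exact Or.inr hb0

end IsApproxPrime

theorem all_proper_ideals_prime_implies_approx_prime_ring_general
    {X F : Type*} (Φ : X → F) (add : X → X → X) (neg : X → X) (mul : X → X → X)
    (zero : X) (R : Set X)
    -- products of elements of `R` lie in `R`
    (hclosed : ∀ x ∈ R, ∀ y ∈ R, mul x y ∈ R)
    -- the zero ideal `(0) = {0}` is an approximately ideal, and it is proper
    (hzeroIdeal : IsApproxIdeal Φ add neg mul R {zero})
    (hproper : ({zero} : Set X) ≠ R)
    -- every approximately ideal other than `R` is approximately prime
    (hprime : ∀ I : Set X, IsApproxIdeal Φ add neg mul R I → I ≠ R →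
        ∀ a ∈ R, ∀ b ∈ R, mul a b ∈ PhiStar Φ I → a ∈ I ∨ b ∈ I) :
    ∀ a ∈ R, ∀ b ∈ R, ∀ r ∈ R, r ≠ zero → mul (mul a r) b = zero →
      a = zero ∨ b = zero := by
  have hzeroPrime : IsApproxPrime Φ mul R {zero} := hprime {zero} hzeroIdeal hproper
  intro a ha b hb r hr hr0 harb
  exact hzeroPrime.eq_or_eq_of_mul_mul_eq hclosed ha hb hr hr0 harb

/-- If every approximately ideal of `R` other than `R` is approximately
prime and the zero ideal `(0)` is proper, then for any `a, b ∈ R` and any nonzero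
`r ∈ R` with `a·r·b = 0`, either `a = 0` or `b = 0` (so `R` is an approximately
prime ring). -/
theorem all_proper_ideals_prime_implies_approx_prime_ring
    {X F : Type*} (Φ : X → F) (add : X → X → X) (neg : X → X) (mul : X → X → X)
    (zero : X) (R : Set X) (hzR : zero ∈ R)
    -- `0` is absorbing for multiplication
    (h0mul : ∀ x : X, mul zero x = zero ∧ mul x zero = zero)
    -- `0` is the only element of `R` with the feature value of `0`
    (hPhi0 : ∀ z ∈ R, Φ z = Φ zero → z = zero)
    -- products of elements of `R` lie in `R`
    (hclosed : ∀ x ∈ R, ∀ y ∈ R, mul x y ∈ R)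
    -- the zero ideal `(0) = {0}` is an approximately ideal, and it is proper
    (hzeroIdeal : IsApproxIdeal Φ add neg mul R {zero})
    (hproper : ({zero} : Set X) ≠ R)
    -- every approximately ideal other than `R` is approximately prime
    (hprime : ∀ I : Set X, IsApproxIdeal Φ add neg mul R I → I ≠ R →
        ∀ a ∈ R, ∀ b ∈ R, mul a b ∈ PhiStar Φ I → a ∈ I ∨ b ∈ I) :
    ∀ a ∈ R, ∀ b ∈ R, ∀ r ∈ R, r ≠ zero → mul (mul a r) b = zero →
      a = zero ∨ b = zero :=
  all_proper_ideals_prime_implies_approx_prime_ring_general Φ add neg mul zero R hclosed hzeroIdeal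
    hproper hprime
end
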